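/- arXiv:1907.02023 — 4 statements merged into one kernel-verified Lean document; each statement's English description precedes it below -/
import Mathlib

section
/- Let ψ be an element of a Clifford module satisfying the chirality condition e_0·e_n·ψ = ±ψ. Then for each A ∈ {1, …, n-1} one has ⟨e_0·e_A·ψ, ψ⟩ = 0, and moreover ⟨e_n·ψ, ψ⟩ = 0. -/
local notation "⟪" x ", " y "⟫" => @inner ℂ _ _ x y

/-- If ψ satisfies the chirality condition e_0·e_n·ψ = ±ψ, then ⟨e_0·e_A·ψ, ψ⟩ = 0
for A = 1,…,n-1 and ⟨e_n·ψ, ψ⟩ = 0.  (Dimension n = m+1; e_n is `e (Fin.last m).succ`,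
boundary-tangential indices are `A.castSucc.succ` for A : Fin m.) -/
theorem stmt4 (m : ℕ) (S : Type*) [NormedAddCommGroup S] [InnerProductSpace ℂ S]
    (e : Fin (m + 2) → (S →ₗ[ℂ] S))
    (hanti : ∀ α β : Fin (m + 2), α ≠ β → e α ∘ₗ e β = -(e β ∘ₗ e α))
    (hsq0 : e 0 ∘ₗ e 0 = LinearMap.id)
    (hsqi : ∀ i : Fin (m + 1), e i.succ ∘ₗ e i.succ = -LinearMap.id)
    (he0 : ∀ ψ φ : S, ⟪e 0 ψ, φ⟫ = ⟪ψ, e 0 φ⟫)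
    (hskew : ∀ (i : Fin (m + 1)) (ψ φ : S), ⟪e i.succ ψ, φ⟫ = -⟪ψ, e i.succ φ⟫)
    (ψ : S)
    (hchir : e 0 (e (Fin.last m).succ ψ) = ψ ∨ e 0 (e (Fin.last m).succ ψ) = -ψ) :
    (∀ A : Fin m, ⟪e 0 (e A.castSucc.succ ψ), ψ⟫ = 0) ∧
      ⟪e (Fin.last m).succ ψ, ψ⟫ = 0 := by
  have h00 : ∀ x : S, e 0 (e 0 x) = x := fun x => by
    simpa using LinearMap.ext_iff.mp hsq0 x
  have hac : ∀ (α β : Fin (m + 2)), α ≠ β → ∀ x : S, e α (e β x) = -(e β (e α x)) := by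
    intro α β h x
    simpa using LinearMap.ext_iff.mp (hanti α β h) x
  set n' := (Fin.last m).succ with hn'
  have hskn : ∀ x y : S, ⟪e n' x, y⟫ = -⟪x, e n' y⟫ := fun x y => hskew (Fin.last m) x y
  constructor
  · intro A
    set A' := A.castSucc.succ with hA'
    have hA0 : A' ≠ (0 : Fin (m + 2)) := Fin.succ_ne_zero _
    have hAn : A' ≠ n' := fun hcon =>
      (Fin.castSucc_lt_last A).ne (Fin.succ_injective _ hcon)
    have hskA : ∀ x y : S, ⟪e A' x, y⟫ = -⟪x, e A' y⟫ := fun x y => hskew A.castSucc x y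
    have step1 : ⟪e 0 (e A' ψ), e 0 (e n' ψ)⟫ = ⟪e A' (e n' ψ), ψ⟫ := by
      rw [← he0, h00]
      have h2 : ⟪e A' ψ, e n' ψ⟫ = -⟪e n' (e A' ψ), ψ⟫ := by
        linear_combination hskn (e A' ψ) ψ
      rw [h2, hac n' A' (Ne.symm hAn)]
      simp
    have step2 : ⟪e 0 (e A' (e 0 (e n' ψ))), ψ⟫ = -⟪e A' (e n' ψ), ψ⟫ := by
      rw [hac A' 0 hA0, map_neg, h00]
      simp
    rcases hchir with h | h
    · rw [h] at step1 step2
      linear_combination (step1 + step2) / 2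
    · rw [h] at step1 step2
      simp only [inner_neg_right, map_neg, inner_neg_left] at step1 step2
      linear_combination -(step1 + step2) / 2
  · have key : ⟪e n' ψ, ψ⟫ = -⟪e n' ψ, ψ⟫ := by
      rcases hchir with h | h
      · calc ⟪e n' ψ, ψ⟫ = ⟪e n' ψ, e 0 (e n' ψ)⟫ := by rw [h]
          _ = ⟪e 0 (e n' ψ), e n' ψ⟫ := (he0 _ _).symm
          _ = ⟪ψ, e n' ψ⟫ := by rw [h]
          _ = -⟪e n' ψ, ψ⟫ := by linear_combination hskn ψ ψ
      · calc ⟪e n' ψ, ψ⟫ = -⟪e n' ψ, e 0 (e n' ψ)⟫ := by rw [h]; simp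
          _ = -⟪e 0 (e n' ψ), e n' ψ⟫ := by rw [he0]
          _ = ⟪ψ, e n' ψ⟫ := by rw [h]; simp
          _ = -⟪e n' ψ, ψ⟫ := by linear_combination hskn ψ ψ
    linear_combination key / 2
end

section
/- (Hardy inequality on ℝ^n, n ≥ 3) For every smooth compactly supported function ψ : ℝ^n → ℂ (or ℂ^k-valued), one has ∫_{ℝ^n} ((n-2)²/(4|x|²)) |ψ(x)|² dx ≤ ∫_{ℝ^n} |∇ψ(x)|² dx. -/
open MeasureTheory

lemma intDirDeriv_zero {E : Type*} [NormedAddCommGroup E] [NormedSpace ℝ E]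
    [MeasurableSpace E] [BorelSpace E] [FiniteDimensional ℝ E] {μ : Measure E}
    [μ.IsAddHaarMeasure] {g : E → ℝ} (hg : ContDiff ℝ 1 g) (h'g : HasCompactSupport g)
    (v : E) : ∫ x, fderiv ℝ g x v ∂μ = 0 := by
  obtain ⟨C, hC⟩ := ContDiff.lipschitzWith_of_hasCompactSupport h'g hg one_ne_zero
  have h := LipschitzWith.integral_lineDeriv_mul_eq (μ := μ) (f := fun _ : E => (1:ℝ))
    (LipschitzWith.const 1) hC h'g (-v)
  have h1 : ∀ x : E, lineDeriv ℝ (fun _ : E => (1:ℝ)) x (-v) = 0 := by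
    intro x
    rw [(differentiableAt_const (1:ℝ)).lineDeriv_eq_fderiv]
    simp
  have h2 : ∀ x : E, lineDeriv ℝ g x (- -v) = fderiv ℝ g x v := by
    intro x
    rw [((hg.differentiable one_ne_zero) x).lineDeriv_eq_fderiv]
    simp
  simp only [h1, h2, zero_mul, integral_zero, mul_one] at h
  exact h.symm

set_option maxHeartbeats 1000000 in
lemma div_identity {n : ℕ} {u : EuclideanSpace ℝ (Fin n) → ℝ}
    (hu : ContDiff ℝ (⊤ : ℕ∞) u) (husupp : HasCompactSupport u) {ε : ℝ} (hε : 0 < ε) :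
    ∫ x : EuclideanSpace ℝ (Fin n),
      ((n : ℝ) * (u x * (‖x‖ ^ 2 + ε)⁻¹)
        + (u x * (-(((‖x‖ ^ 2 + ε) ^ 2)⁻¹) * (2 * ‖x‖ ^ 2))
           + (‖x‖ ^ 2 + ε)⁻¹ * fderiv ℝ u x x)) = 0 := by
  have hq0 : ∀ x : EuclideanSpace ℝ (Fin n), (‖x‖ ^ 2 + ε) ≠ 0 := fun x => by positivity
  have hq : ContDiff ℝ (⊤ : ℕ∞) (fun x : EuclideanSpace ℝ (Fin n) => ‖x‖ ^ 2 + ε) :=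
    (contDiff_norm_sq ℝ).add contDiff_const
  have hφ : ContDiff ℝ (⊤ : ℕ∞) (fun x : EuclideanSpace ℝ (Fin n) => u x * (‖x‖ ^ 2 + ε)⁻¹) :=
    hu.mul (hq.inv hq0)
  have hφsupp : HasCompactSupport (fun x : EuclideanSpace ℝ (Fin n) => u x * (‖x‖ ^ 2 + ε)⁻¹) :=
    husupp.mul_right
  have hgsmooth : ∀ i : Fin n,
      ContDiff ℝ (⊤ : ℕ∞) (fun x : EuclideanSpace ℝ (Fin n) => (u x * (‖x‖ ^ 2 + ε)⁻¹) * x i) :=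
    fun i => hφ.mul (by fun_prop)
  have hgsupp : ∀ i : Fin n,
      HasCompactSupport (fun x : EuclideanSpace ℝ (Fin n) => (u x * (‖x‖ ^ 2 + ε)⁻¹) * x i) :=
    fun i => hφsupp.mul_right
  -- pointwise divergence computation
  have key : ∀ x : EuclideanSpace ℝ (Fin n),
      ∑ i, fderiv ℝ (fun y : EuclideanSpace ℝ (Fin n) => (u y * (‖y‖ ^ 2 + ε)⁻¹) * y i) x
          (EuclideanSpace.single i 1) =
      (n : ℝ) * (u x * (‖x‖ ^ 2 + ε)⁻¹)
        + (u x * (-(((‖x‖ ^ 2 + ε) ^ 2)⁻¹) * (2 * ‖x‖ ^ 2))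
           + (‖x‖ ^ 2 + ε)⁻¹ * fderiv ℝ u x x) := by
    intro x
    have hux : HasFDerivAt u (fderiv ℝ u x) x := ((hu.differentiable (by simp)) x).hasFDerivAt
    have hqx : HasFDerivAt (fun y : EuclideanSpace ℝ (Fin n) => ‖y‖ ^ 2 + ε)
        (2 • innerSL ℝ x) x := by
      simpa using ((hasFDerivAt_id x).norm_sq).add_const ε
    have hqinvx : HasFDerivAt (fun y : EuclideanSpace ℝ (Fin n) => (‖y‖ ^ 2 + ε)⁻¹)
        ((-((‖x‖ ^ 2 + ε) ^ 2)⁻¹) • (2 • innerSL ℝ x)) x :=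
      (hasDerivAt_inv (hq0 x)).comp_hasFDerivAt x hqx
    have hφx : HasFDerivAt (fun y : EuclideanSpace ℝ (Fin n) => u y * (‖y‖ ^ 2 + ε)⁻¹)
        (u x • ((-((‖x‖ ^ 2 + ε) ^ 2)⁻¹) • (2 • innerSL ℝ x))
          + (‖x‖ ^ 2 + ε)⁻¹ • fderiv ℝ u x) x := hux.mul hqinvx
    have hgx : ∀ i : Fin n,
        fderiv ℝ (fun y : EuclideanSpace ℝ (Fin n) => (u y * (‖y‖ ^ 2 + ε)⁻¹) * y i) x =
          (u x * (‖x‖ ^ 2 + ε)⁻¹) • (EuclideanSpace.proj i : EuclideanSpace ℝ (Fin n) →L[ℝ] ℝ)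
            + x i • (u x • ((-((‖x‖ ^ 2 + ε) ^ 2)⁻¹) • (2 • innerSL ℝ x))
              + (‖x‖ ^ 2 + ε)⁻¹ • fderiv ℝ u x) :=
      fun i => (hφx.mul (EuclideanSpace.proj i).hasFDerivAt).fderiv
    have hbasis : ∑ i, (x i) • (EuclideanSpace.single i (1:ℝ)) = x := by
      simpa [EuclideanSpace.basisFun_apply] using (EuclideanSpace.basisFun (Fin n) ℝ).sum_repr x
    have heval : ∀ L : EuclideanSpace ℝ (Fin n) →L[ℝ] ℝ,
        ∑ i, (x i) * L (EuclideanSpace.single i 1) = L x := by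
      intro L
      conv_rhs => rw [← hbasis]
      rw [map_sum]
      simp [_root_.map_smul, smul_eq_mul]
    calc ∑ i, fderiv ℝ (fun y : EuclideanSpace ℝ (Fin n) => (u y * (‖y‖ ^ 2 + ε)⁻¹) * y i) x
          (EuclideanSpace.single i 1)
        = ∑ i, ((u x * (‖x‖ ^ 2 + ε)⁻¹) * (EuclideanSpace.single i (1:ℝ) i)
            + x i * ((u x • ((-((‖x‖ ^ 2 + ε) ^ 2)⁻¹) • (2 • innerSL ℝ x))
              + (‖x‖ ^ 2 + ε)⁻¹ • fderiv ℝ u x) (EuclideanSpace.single i 1))) := by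
          simp only [hgx]
          refine Finset.sum_congr rfl fun i _ => ?_
          simp [EuclideanSpace.proj]
          ring
      _ = (n : ℝ) * (u x * (‖x‖ ^ 2 + ε)⁻¹)
            + ((u x • ((-((‖x‖ ^ 2 + ε) ^ 2)⁻¹) • (2 • innerSL ℝ x))
              + (‖x‖ ^ 2 + ε)⁻¹ • fderiv ℝ u x) x) := by
          rw [Finset.sum_add_distrib, heval]
          congr 1
          simp [EuclideanSpace.single_apply, Finset.card_univ, mul_comm]
      _ = _ := by
          simp only [ContinuousLinearMap.add_apply, ContinuousLinearMap.smul_apply,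
            ContinuousLinearMap.coe_smul', Pi.smul_apply, innerSL_apply_apply,
            real_inner_self_eq_norm_sq, smul_eq_mul]
          ring
  have hint : ∀ i : Fin n, Integrable (fun x : EuclideanSpace ℝ (Fin n) =>
      fderiv ℝ (fun y : EuclideanSpace ℝ (Fin n) => (u y * (‖y‖ ^ 2 + ε)⁻¹) * y i) x
        (EuclideanSpace.single i 1)) := by
    intro i
    have hc : Continuous (fun x : EuclideanSpace ℝ (Fin n) =>
        fderiv ℝ (fun y : EuclideanSpace ℝ (Fin n) => (u y * (‖y‖ ^ 2 + ε)⁻¹) * y i) x) :=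
      (hgsmooth i).continuous_fderiv (by simp)
    have hsupp2 : HasCompactSupport (fun x : EuclideanSpace ℝ (Fin n) =>
        fderiv ℝ (fun y : EuclideanSpace ℝ (Fin n) => (u y * (‖y‖ ^ 2 + ε)⁻¹) * y i) x
          (EuclideanSpace.single i 1)) :=
      ((hgsupp i).fderiv ℝ).comp_left
        (g := fun L : EuclideanSpace ℝ (Fin n) →L[ℝ] ℝ => L (EuclideanSpace.single i 1))
        (by simp)
    exact (hc.clm_apply continuous_const).integrable_of_hasCompactSupport hsupp2
  have hzero : ∀ i : Fin n, ∫ x : EuclideanSpace ℝ (Fin n),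
      fderiv ℝ (fun y : EuclideanSpace ℝ (Fin n) => (u y * (‖y‖ ^ 2 + ε)⁻¹) * y i) x
        (EuclideanSpace.single i 1) = 0 :=
    fun i => intDirDeriv_zero ((hgsmooth i).of_le (by simp)) (hgsupp i) _
  calc ∫ x : EuclideanSpace ℝ (Fin n),
        ((n : ℝ) * (u x * (‖x‖ ^ 2 + ε)⁻¹)
          + (u x * (-(((‖x‖ ^ 2 + ε) ^ 2)⁻¹) * (2 * ‖x‖ ^ 2))
             + (‖x‖ ^ 2 + ε)⁻¹ * fderiv ℝ u x x))
      = ∫ x : EuclideanSpace ℝ (Fin n), ∑ i,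
          fderiv ℝ (fun y : EuclideanSpace ℝ (Fin n) => (u y * (‖y‖ ^ 2 + ε)⁻¹) * y i) x
            (EuclideanSpace.single i 1) :=
        integral_congr_ae (Filter.Eventually.of_forall fun x => (key x).symm)
    _ = ∑ i, ∫ x : EuclideanSpace ℝ (Fin n),
          fderiv ℝ (fun y : EuclideanSpace ℝ (Fin n) => (u y * (‖y‖ ^ 2 + ε)⁻¹) * y i) x
            (EuclideanSpace.single i 1) := integral_finset_sum _ (fun i _ => hint i)
    _ = 0 := by simp [hzero]

lemma amgm (a c t : ℝ) (ht : 0 < t) : 2 * a * c ≤ (2 / t) * a ^ 2 + (t / 2) * c ^ 2 := by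
  have key : (2 / t) * a ^ 2 + (t / 2) * c ^ 2 - 2 * a * c = (2 * a - t * c) ^ 2 / (2 * t) := by
    field_simp
    ring
  nlinarith [div_nonneg (sq_nonneg (2 * a - t * c)) (by linarith : (0:ℝ) ≤ 2 * t)]

set_option maxHeartbeats 1000000 in
lemma key_eps (n : ℕ) (hn : 3 ≤ n) (ψ : EuclideanSpace ℝ (Fin n) → ℂ)
    (hsmooth : ContDiff ℝ (⊤ : ℕ∞) ψ) (hsupp : HasCompactSupport ψ) {ε : ℝ} (hε : 0 < ε) :
    (((n : ℝ) - 2) ^ 2 / 4) * (∫ x : EuclideanSpace ℝ (Fin n), ‖ψ x‖ ^ 2 * (‖x‖ ^ 2 + ε)⁻¹)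
      ≤ ∫ x : EuclideanSpace ℝ (Fin n), ‖fderiv ℝ ψ x‖ ^ 2 := by
  set t : ℝ := (n : ℝ) - 2 with htdef
  have ht : (0:ℝ) < t := by
    have : (3:ℝ) ≤ (n:ℝ) := by exact_mod_cast hn
    simp only [htdef]
    linarith
  have hq0 : ∀ x : EuclideanSpace ℝ (Fin n), (‖x‖ ^ 2 + ε) ≠ 0 := fun x => by positivity
  have hqpos : ∀ x : EuclideanSpace ℝ (Fin n), (0:ℝ) < ‖x‖ ^ 2 + ε := fun x => by positivity
  have hqc : Continuous (fun x : EuclideanSpace ℝ (Fin n) => (‖x‖ ^ 2 + ε)⁻¹) :=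
    ((continuous_norm.pow 2).add continuous_const).inv₀ hq0
  have hψc : Continuous ψ := hsmooth.continuous
  have hDc : Continuous (fderiv ℝ ψ) := hsmooth.continuous_fderiv (by simp)
  have hu : ContDiff ℝ (⊤ : ℕ∞) (fun x : EuclideanSpace ℝ (Fin n) => ‖ψ x‖ ^ 2) :=
    hsmooth.norm_sq ℝ
  have husupp : HasCompactSupport (fun x : EuclideanSpace ℝ (Fin n) => ‖ψ x‖ ^ 2) :=
    hsupp.comp_left (g := fun z : ℂ => ‖z‖ ^ 2) (by simp)
  set f1 : EuclideanSpace ℝ (Fin n) → ℝ := fun x => ‖ψ x‖ ^ 2 * (‖x‖ ^ 2 + ε)⁻¹ with hf1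
  set f2 : EuclideanSpace ℝ (Fin n) → ℝ :=
    fun x => ‖ψ x‖ ^ 2 * ((((‖x‖ ^ 2 + ε)) ^ 2)⁻¹ * (2 * ‖x‖ ^ 2)) with hf2
  set f3 : EuclideanSpace ℝ (Fin n) → ℝ :=
    fun x => (‖x‖ ^ 2 + ε)⁻¹ * (2 * (inner ℝ (ψ x) (fderiv ℝ ψ x x) : ℝ)) with hf3
  set fD : EuclideanSpace ℝ (Fin n) → ℝ := fun x => ‖fderiv ℝ ψ x‖ ^ 2 with hfD
  -- integrability
  have hif1 : Integrable f1 := by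
    apply Continuous.integrable_of_hasCompactSupport
    · exact (hψc.norm.pow 2).mul hqc
    · exact husupp.mul_right
  have hif2 : Integrable f2 := by
    apply Continuous.integrable_of_hasCompactSupport
    · exact (hψc.norm.pow 2).mul
        (((((continuous_norm.pow 2).add continuous_const).pow 2).inv₀ (fun x => pow_ne_zero 2 (hq0 x))).mul
          (continuous_const.mul (continuous_norm.pow 2)))
    · exact husupp.mul_right
  have hif3 : Integrable f3 := by
    apply Continuous.integrable_of_hasCompactSupport
    · exact hqc.mul (continuous_const.mul (hψc.inner (hDc.clm_apply continuous_id)))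
    · apply HasCompactSupport.mono hsupp
      intro x hx
      simp only [Function.mem_support] at hx ⊢
      intro hψ0
      exact hx (by simp [hf3, hψ0])
  have hifD : Integrable fD := by
    apply Continuous.integrable_of_hasCompactSupport
    · exact hDc.norm.pow 2
    · exact (hsupp.fderiv ℝ).comp_left (g := fun L : _ →L[ℝ] ℂ => ‖L‖ ^ 2) (by simp)
  -- divergence identity in terms of f1, f2, f3
  have hid : ∫ x : EuclideanSpace ℝ (Fin n), ((n : ℝ) * f1 x - f2 x + f3 x) = 0 := by
    have h := div_identity (n := n) hu husupp hε
    have heq : ∀ x : EuclideanSpace ℝ (Fin n),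
        ((n : ℝ) * ((fun x : EuclideanSpace ℝ (Fin n) => ‖ψ x‖ ^ 2) x * (‖x‖ ^ 2 + ε)⁻¹)
          + ((fun x : EuclideanSpace ℝ (Fin n) => ‖ψ x‖ ^ 2) x
                * (-(((‖x‖ ^ 2 + ε) ^ 2)⁻¹) * (2 * ‖x‖ ^ 2))
             + (‖x‖ ^ 2 + ε)⁻¹
                * fderiv ℝ (fun x : EuclideanSpace ℝ (Fin n) => ‖ψ x‖ ^ 2) x x))
        = (n : ℝ) * f1 x - f2 x + f3 x := by
      intro x
      have hψx : HasFDerivAt ψ (fderiv ℝ ψ x) x := ((hsmooth.differentiable (by simp)) x).hasFDerivAt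
      have hDu : fderiv ℝ (fun x : EuclideanSpace ℝ (Fin n) => ‖ψ x‖ ^ 2) x
          = 2 • (innerSL ℝ (ψ x)).comp (fderiv ℝ ψ x) := hψx.norm_sq.fderiv
      rw [hDu]
      simp only [hf1, hf2, hf3, ContinuousLinearMap.smul_apply, ContinuousLinearMap.comp_apply,
        innerSL_apply_apply, smul_eq_mul]
      ring
    have h2 : ∫ x : EuclideanSpace ℝ (Fin n), ((n : ℝ) * f1 x - f2 x + f3 x)
        = ∫ x : EuclideanSpace ℝ (Fin n),
          ((n : ℝ) * ((fun x : EuclideanSpace ℝ (Fin n) => ‖ψ x‖ ^ 2) x * (‖x‖ ^ 2 + ε)⁻¹)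
          + ((fun x : EuclideanSpace ℝ (Fin n) => ‖ψ x‖ ^ 2) x
                * (-(((‖x‖ ^ 2 + ε) ^ 2)⁻¹) * (2 * ‖x‖ ^ 2))
             + (‖x‖ ^ 2 + ε)⁻¹
                * fderiv ℝ (fun x : EuclideanSpace ℝ (Fin n) => ‖ψ x‖ ^ 2) x x)) :=
      integral_congr_ae (Filter.Eventually.of_forall fun x => (heq x).symm)
    rw [h2]
    exact h
  -- pointwise bound
  have hpt : ∀ x : EuclideanSpace ℝ (Fin n), f2 x - f3 x
      ≤ 2 * f1 x + ((2 / t) * fD x + (t / 2) * f1 x) := by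
    intro x
    have hQ : (0:ℝ) < ‖x‖ ^ 2 + ε := hqpos x
    have hIB : -(inner ℝ (ψ x) (fderiv ℝ ψ x x) : ℝ) ≤ ‖ψ x‖ * (‖fderiv ℝ ψ x‖ * ‖x‖) := by
      have h1 : |(inner ℝ (ψ x) (fderiv ℝ ψ x x) : ℝ)| ≤ ‖ψ x‖ * ‖fderiv ℝ ψ x x‖ :=
        abs_real_inner_le_norm _ _
      have h2 : ‖fderiv ℝ ψ x x‖ ≤ ‖fderiv ℝ ψ x‖ * ‖x‖ := (fderiv ℝ ψ x).le_opNorm x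
      nlinarith [neg_abs_le (inner ℝ (ψ x) (fderiv ℝ ψ x x) : ℝ), norm_nonneg (ψ x)]
    simp only [hf1, hf2, hf3, hfD]
    set a := ‖fderiv ℝ ψ x‖ with ha
    set b := ‖ψ x‖ with hb
    set r := ‖x‖ with hrr
    set I := (inner ℝ (ψ x) (fderiv ℝ ψ x x) : ℝ) with hI
    have ha0 : 0 ≤ a := norm_nonneg _
    have hb0 : 0 ≤ b := norm_nonneg _
    have hr0 : 0 ≤ r := norm_nonneg _
    have hQ' : (0:ℝ) < r ^ 2 + ε := hQ
    have step1 : b ^ 2 * (((r ^ 2 + ε) ^ 2)⁻¹ * (2 * r ^ 2)) ≤ 2 * (b ^ 2 * (r ^ 2 + ε)⁻¹) := by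
      rw [← sub_nonneg]
      have : 2 * (b ^ 2 * (r ^ 2 + ε)⁻¹) - b ^ 2 * (((r ^ 2 + ε) ^ 2)⁻¹ * (2 * r ^ 2))
          = 2 * b ^ 2 * ε / (r ^ 2 + ε) ^ 2 := by
        field_simp
        ring
      rw [this]
      positivity
    have step2 : -((r ^ 2 + ε)⁻¹ * (2 * I)) ≤ 2 * a * (b * r / (r ^ 2 + ε)) := by
      have e1 : -((r ^ 2 + ε)⁻¹ * (2 * I)) = 2 * (-I) / (r ^ 2 + ε) := by ring
      have e2 : 2 * a * (b * r / (r ^ 2 + ε)) = 2 * (b * (a * r)) / (r ^ 2 + ε) := by ring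
      rw [e1, e2]
      gcongr 2 * ?_ / (r ^ 2 + ε)
    have step3 : 2 * a * (b * r / (r ^ 2 + ε))
        ≤ (2 / t) * a ^ 2 + (t / 2) * (b * r / (r ^ 2 + ε)) ^ 2 :=
      amgm a (b * r / (r ^ 2 + ε)) t ht
    have step4 : (t / 2) * (b * r / (r ^ 2 + ε)) ^ 2 ≤ (t / 2) * (b ^ 2 * (r ^ 2 + ε)⁻¹) := by
      have hB : (b * r / (r ^ 2 + ε)) ^ 2 ≤ b ^ 2 * (r ^ 2 + ε)⁻¹ := by
        rw [div_pow, ← div_eq_mul_inv, div_le_div_iff₀ (by positivity) hQ']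
        nlinarith [sq_nonneg (b * r), sq_nonneg b, mul_nonneg (sq_nonneg b) hε.le]
      exact mul_le_mul_of_nonneg_left hB (by positivity)
    linarith
  -- put it together
  set A := ∫ x : EuclideanSpace ℝ (Fin n), f1 x with hAdef
  set B := ∫ x : EuclideanSpace ℝ (Fin n), fD x with hBdef
  have hA0 : 0 ≤ A := integral_nonneg (fun x => by simp only [hf1]; positivity)
  have hB0 : 0 ≤ B := integral_nonneg (fun x => by simp only [hfD]; positivity)
  have hsplit : (n : ℝ) * A = ∫ x : EuclideanSpace ℝ (Fin n), (f2 x - f3 x) := by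
    have e1 : ∫ x : EuclideanSpace ℝ (Fin n), ((n : ℝ) * f1 x - f2 x + f3 x)
        = (∫ x : EuclideanSpace ℝ (Fin n), ((n : ℝ) * f1 x - f2 x))
          + ∫ x : EuclideanSpace ℝ (Fin n), f3 x :=
      integral_add ((hif1.const_mul _).sub hif2) hif3
    have e2 : ∫ x : EuclideanSpace ℝ (Fin n), ((n : ℝ) * f1 x - f2 x)
        = (∫ x : EuclideanSpace ℝ (Fin n), (n : ℝ) * f1 x)
          - ∫ x : EuclideanSpace ℝ (Fin n), f2 x :=
      integral_sub (hif1.const_mul _) hif2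
    have e3 : ∫ x : EuclideanSpace ℝ (Fin n), (n : ℝ) * f1 x = (n : ℝ) * A :=
      integral_const_mul _ _
    have e4 : ∫ x : EuclideanSpace ℝ (Fin n), (f2 x - f3 x)
        = (∫ x : EuclideanSpace ℝ (Fin n), f2 x) - ∫ x : EuclideanSpace ℝ (Fin n), f3 x :=
      integral_sub hif2 hif3
    rw [e1, e2, e3] at hid
    rw [e4]
    linarith
  have hmono : ∫ x : EuclideanSpace ℝ (Fin n), (f2 x - f3 x)
      ≤ ∫ x : EuclideanSpace ℝ (Fin n), (2 * f1 x + ((2 / t) * fD x + (t / 2) * f1 x)) :=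
    integral_mono (hif2.sub hif3)
      ((hif1.const_mul 2).add ((hifD.const_mul _).add (hif1.const_mul _))) hpt
  have hrhs : ∫ x : EuclideanSpace ℝ (Fin n), (2 * f1 x + ((2 / t) * fD x + (t / 2) * f1 x))
      = 2 * A + ((2 / t) * B + (t / 2) * A) := by
    have e1 : ∫ x : EuclideanSpace ℝ (Fin n), (2 * f1 x + ((2 / t) * fD x + (t / 2) * f1 x))
        = (∫ x : EuclideanSpace ℝ (Fin n), 2 * f1 x)
          + ∫ x : EuclideanSpace ℝ (Fin n), ((2 / t) * fD x + (t / 2) * f1 x) :=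
      integral_add (hif1.const_mul 2) ((hifD.const_mul _).add (hif1.const_mul _))
    have e2 : ∫ x : EuclideanSpace ℝ (Fin n), ((2 / t) * fD x + (t / 2) * f1 x)
        = (∫ x : EuclideanSpace ℝ (Fin n), (2 / t) * fD x)
          + ∫ x : EuclideanSpace ℝ (Fin n), (t / 2) * f1 x :=
      integral_add (hifD.const_mul _) (hif1.const_mul _)
    rw [e1, e2, integral_const_mul, integral_const_mul, integral_const_mul]
  have hn2 : (n : ℝ) = t + 2 := by simp [htdef]
  have h5 : (t / 2) * A ≤ (2 / t) * B := by
    rw [hn2] at hsplit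
    have hh : (t + 2) * A ≤ 2 * A + (2 / t * B + t / 2 * A) := hsplit.trans_le (hmono.trans_eq hrhs)
    have e : (t + 2) * A = 2 * A + (t / 2 * A + t / 2 * A) := by ring
    linarith [hh, e]
  have h6 : (t / 2) * ((t / 2) * A) ≤ (t / 2) * ((2 / t) * B) :=
    mul_le_mul_of_nonneg_left h5 (by positivity)
  have h7 : (t / 2) * ((2 / t) * B) = B := by
    have e : (t / 2) * (2 / t) = 1 := by field_simp
    rw [← mul_assoc, e, one_mul]
  have h8 : (t / 2) * ((t / 2) * A) = t ^ 2 / 4 * A := by ring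
  calc (((n : ℝ) - 2) ^ 2 / 4) * A = t ^ 2 / 4 * A := by rw [htdef]
    _ ≤ B := by linarith


set_option maxHeartbeats 1000000 in
/-- Hardy inequality on ℝⁿ, n ≥ 3:
∫ ((n-2)²/(4|x|²)) |ψ|² ≤ ∫ |∇ψ|² for smooth compactly supported ψ. -/
theorem stmt6 (n : ℕ) (hn : 3 ≤ n) (ψ : EuclideanSpace ℝ (Fin n) → ℂ)
    (hsmooth : ContDiff ℝ (⊤ : ℕ∞) ψ) (hsupp : HasCompactSupport ψ) :
    ∫ x : EuclideanSpace ℝ (Fin n),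
        ((n - 2 : ℝ) ^ 2 / (4 * ‖x‖ ^ 2)) * ‖ψ x‖ ^ 2
      ≤ ∫ x : EuclideanSpace ℝ (Fin n), ‖fderiv ℝ ψ x‖ ^ 2 := by
  obtain ⟨m, rfl⟩ := Nat.exists_eq_add_of_le' hn
  set B := ∫ x : EuclideanSpace ℝ (Fin (m + 3)), ‖fderiv ℝ ψ x‖ ^ 2 with hBdef
  have hB0 : 0 ≤ B := integral_nonneg fun x => by positivity
  have hψc : Continuous ψ := hsmooth.continuous
  set c : ℝ := (((m + 3 : ℕ) : ℝ) - 2) ^ 2 / 4 with hcdef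
  have hc0 : 0 ≤ c := by positivity
  set F : EuclideanSpace ℝ (Fin (m + 3)) → ℝ :=
    fun x => c * (‖ψ x‖ ^ 2 * (‖x‖ ^ 2)⁻¹) with hFdef
  set G : ℕ → EuclideanSpace ℝ (Fin (m + 3)) → ℝ :=
    fun k x => c * (‖ψ x‖ ^ 2 * (‖x‖ ^ 2 + (1 : ℝ)/(k + 1))⁻¹) with hGdef
  have hFeq : ∀ x : EuclideanSpace ℝ (Fin (m + 3)),
      (((m + 3 : ℕ) : ℝ) - 2) ^ 2 / (4 * ‖x‖ ^ 2) * ‖ψ x‖ ^ 2 = F x := by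
    intro x
    simp only [hFdef, hcdef]
    by_cases hx : ‖x‖ = 0
    · rw [hx]
      norm_num
    · field_simp
      try ring
  have hGle : ∀ k : ℕ, ∫ x, G k x ≤ B := by
    intro k
    have hε : (0:ℝ) < 1/(k+1) := by positivity
    have h := key_eps (m + 3) (by omega) ψ hsmooth hsupp hε
    rw [hGdef]
    rw [integral_const_mul]
    exact h
  have hGint : ∀ k : ℕ, Integrable (G k) := by
    intro k
    have hq0 : ∀ x : EuclideanSpace ℝ (Fin (m+3)), (‖x‖ ^ 2 + (1:ℝ)/(k+1)) ≠ 0 :=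
      fun x => by positivity
    apply Continuous.integrable_of_hasCompactSupport
    · exact continuous_const.mul ((hψc.norm.pow 2).mul
        (((continuous_norm.pow 2).add continuous_const).inv₀ hq0))
    · have husupp : HasCompactSupport (fun x : EuclideanSpace ℝ (Fin (m+3)) => ‖ψ x‖ ^ 2) :=
        hsupp.comp_left (g := fun z : ℂ => ‖z‖ ^ 2) (by simp)
      have h2 : HasCompactSupport
          (fun x : EuclideanSpace ℝ (Fin (m+3)) =>
            ‖ψ x‖ ^ 2 * (‖x‖ ^ 2 + (1:ℝ)/(k+1))⁻¹) := husupp.mul_right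
      exact h2.mul_left
  have hG0 : ∀ k x, 0 ≤ G k x := by
    intro k x
    simp only [hGdef]
    positivity
  have hGl : ∀ k : ℕ, ∫⁻ x, ENNReal.ofReal (G k x) ≤ ENNReal.ofReal B := by
    intro k
    rw [← ofReal_integral_eq_lintegral_ofReal (hGint k)
      (Filter.Eventually.of_forall (hG0 k))]
    exact ENNReal.ofReal_le_ofReal (hGle k)
  have hmeasG : ∀ k : ℕ, Measurable fun x => ENNReal.ofReal (G k x) := by
    intro k
    have hq0 : ∀ x : EuclideanSpace ℝ (Fin (m+3)), (‖x‖ ^ 2 + (1:ℝ)/(k+1)) ≠ 0 :=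
      fun x => by positivity
    exact (continuous_const.mul ((hψc.norm.pow 2).mul
      (((continuous_norm.pow 2).add continuous_const).inv₀ hq0))).measurable.ennreal_ofReal
  have hFmeas : AEStronglyMeasurable F volume := by
    apply Measurable.aestronglyMeasurable
    exact (measurable_const.mul (((hψc.norm.pow 2).measurable).mul
      ((continuous_norm.pow 2).measurable.inv)))
  have hF0 : 0 ≤ᵐ[volume] F := by
    apply Filter.Eventually.of_forall
    intro x
    simp only [hFdef]
    positivity
  have hae : ∀ᵐ x : EuclideanSpace ℝ (Fin (m+3)),
      ENNReal.ofReal (F x) ≤ Filter.liminf (fun k => ENNReal.ofReal (G k x)) Filter.atTop := by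
    have hnull : volume ({(0 : EuclideanSpace ℝ (Fin (m+3)))} : Set _) = 0 :=
      measure_singleton _
    filter_upwards [compl_mem_ae_iff.mpr hnull] with x hx
    have hx0 : x ≠ 0 := by simpa using hx
    have hr0 : (‖x‖ ^ 2 : ℝ) ≠ 0 := by
      simpa using (norm_ne_zero_iff.mpr hx0)
    have htend : Filter.Tendsto (fun k : ℕ => G k x) Filter.atTop (nhds (F x)) := by
      simp only [hGdef, hFdef]
      apply Filter.Tendsto.const_mul
      apply Filter.Tendsto.const_mul
      have h1 : Filter.Tendsto (fun k : ℕ => ‖x‖ ^ 2 + (1:ℝ)/(k+1)) Filter.atTop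
          (nhds (‖x‖ ^ 2)) := by
        have := tendsto_one_div_add_atTop_nhds_zero_nat (𝕜 := ℝ)
        simpa using tendsto_const_nhds.add this
      exact (h1.inv₀ hr0)
    have := ((ENNReal.continuous_ofReal.tendsto _).comp htend).liminf_eq
    exact le_of_eq this.symm
  have h1 : ∫⁻ x, ENNReal.ofReal (F x) ≤ ENNReal.ofReal B :=
    calc ∫⁻ x, ENNReal.ofReal (F x)
        ≤ ∫⁻ x, Filter.liminf (fun k => ENNReal.ofReal (G k x)) Filter.atTop :=
          lintegral_mono_ae hae
      _ ≤ Filter.liminf (fun k => ∫⁻ x, ENNReal.ofReal (G k x)) Filter.atTop :=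
          lintegral_liminf_le hmeasG
      _ ≤ ENNReal.ofReal B :=
          le_trans (Filter.liminf_le_liminf (Filter.Eventually.of_forall hGl))
            (le_of_eq (Filter.liminf_const (f := (Filter.atTop : Filter ℕ)) (ENNReal.ofReal B)))
  calc ∫ x : EuclideanSpace ℝ (Fin (m + 3)),
        ((((m + 3 : ℕ) : ℝ)) - 2) ^ 2 / (4 * ‖x‖ ^ 2) * ‖ψ x‖ ^ 2
      = ∫ x : EuclideanSpace ℝ (Fin (m + 3)), F x :=
        integral_congr_ae (Filter.Eventually.of_forall hFeq)
    _ = (∫⁻ x, ENNReal.ofReal (F x)).toReal := integral_eq_lintegral_of_nonneg_ae hF0 hFmeas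
    _ ≤ (ENNReal.ofReal B).toReal := ENNReal.toReal_mono ENNReal.ofReal_ne_top h1
    _ = B := ENNReal.toReal_ofReal hB0
end

section
/- Let S be a Clifford module with positive definite Hermitian product ⟨·,·⟩, indefinite product (ψ,φ) = ⟨e_0·ψ,φ⟩, and Clifford multiplication by an orthonormal Minkowski frame e_0, e_1, …, e_n (e_0· Hermitian, e_i· skew-Hermitian). For ψ ∈ S, define V = ⟨ψ,ψ⟩ and W_j = (e_j·ψ, ψ) for j = 1, …, n. Then Σ_j W_j² ≤ V². Moreover, if ψ ≠ 0 then the spinors e_1·ψ, …, e_n·ψ form an orthogonal family with respect to the real part of ⟨·,·⟩, each of squared norm V. -/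
local notation "⟪" x ", " y "⟫" => @inner ℂ _ _ x y

/-! The Clifford relations make `e 0` and every `e j.succ` isometries, and make the spinors
`e j.succ ψ` pairwise orthogonal for `Re ⟪·, ·⟫`, each of norm `‖ψ‖`. Since
`W_j = Re ⟪e j.succ ψ, e 0 ψ⟫`, Bessel's inequality for `e 0 ψ` against this family gives
`∑ W_j ^ 2 ≤ ‖ψ‖ ^ 2 * ‖e 0 ψ‖ ^ 2 = V ^ 2`. -/

theorem LinearMap.apply_apply_eq_of_comp_self_add_comp_self {K M : Type*} [Field K] [CharZero K]
    [AddCommGroup M] [Module K M] {f : M →ₗ[K] M} {c : K}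
    (h : f ∘ₗ f + f ∘ₗ f = c • LinearMap.id) (x : M) : f (f x) = (c / 2) • x := by
  have hx : f (f x) + f (f x) = c • x := LinearMap.congr_fun h x
  refine smul_right_injective M (two_ne_zero (α := K)) ?_
  change (2 : K) • f (f x) = (2 : K) • (c / 2) • x
  rw [two_smul, hx, smul_smul, mul_div_cancel₀ _ two_ne_zero]

section InnerProduct

variable {E : Type*} [NormedAddCommGroup E] [InnerProductSpace ℂ E]

theorem norm_apply_eq_of_adjoint_apply_apply {T U : E →ₗ[ℂ] E}
    (hadj : ∀ x y, ⟪T x, y⟫ = ⟪x, U y⟫) (hinv : ∀ x, U (T x) = x) (x : E) : ‖T x‖ = ‖x‖ := by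
  have h : ⟪T x, T x⟫ = ⟪x, x⟫ := by rw [hadj, hinv]
  rw [@norm_eq_sqrt_re_inner ℂ, @norm_eq_sqrt_re_inner ℂ, h]

theorem re_inner_apply_apply_eq_zero_of_anticomm {A B : E →ₗ[ℂ] E}
    (hA : ∀ x y, ⟪A x, y⟫ = -⟪x, A y⟫) (hB : ∀ x y, ⟪B x, y⟫ = -⟪x, B y⟫)
    (hAB : ∀ x, A (B x) + B (A x) = 0) (x : E) : (⟪A x, B x⟫).re = 0 := by
  have hsum : ⟪A x, B x⟫ + ⟪B x, A x⟫ = 0 := by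
    rw [hA, hB, ← neg_add, ← inner_add_right, hAB, inner_zero_right, neg_zero]
  have hre := congrArg Complex.re hsum
  rw [Complex.add_re, ← inner_conj_symm (B x), Complex.conj_re, Complex.zero_re] at hre
  linarith

end InnerProduct

theorem sum_real_inner_sq_le_of_orthogonal {E ι : Type*} [NormedAddCommGroup E]
    [InnerProductSpace ℝ E] (s : Finset ι) {v : ι → E} {r : ℝ}
    (horth : Pairwise fun i j => inner ℝ (v i) (v j) = 0) (hnorm : ∀ i, ‖v i‖ = r) (x : E) :
    ∑ i ∈ s, inner ℝ (v i) x ^ 2 ≤ r ^ 2 * ‖x‖ ^ 2 := by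
  rcases eq_or_ne r 0 with rfl | hr
  · simp [norm_eq_zero.mp (hnorm _)]
  have hv : Orthonormal ℝ fun i => r⁻¹ • v i := by
    refine ⟨fun i => ?_, fun i j hij => ?_⟩
    · rw [norm_smul, hnorm, norm_inv, Real.norm_eq_abs,
        abs_of_nonneg (hnorm i ▸ norm_nonneg _), inv_mul_cancel₀ hr]
    · simp [real_inner_smul_left, real_inner_smul_right, horth hij]
  have hbessel := hv.sum_inner_products_le (s := s) x
  simp only [real_inner_smul_left, Real.norm_eq_abs, sq_abs, mul_pow, ← Finset.mul_sum] at hbessel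
  calc ∑ i ∈ s, inner ℝ (v i) x ^ 2 = r ^ 2 * (r⁻¹ ^ 2 * ∑ i ∈ s, inner ℝ (v i) x ^ 2) := by
        field_simp
    _ ≤ r ^ 2 * ‖x‖ ^ 2 := by gcongr

/-- With V = ⟨ψ,ψ⟩ and W_j = (e_j·ψ,ψ) = ⟨e_0·e_j·ψ,ψ⟩, one has Σ_j W_j² ≤ V²;
moreover if ψ ≠ 0 the spinors e_j·ψ are Re⟨·,·⟩-orthogonal, each of squared norm V. -/
theorem stmt8 (n : ℕ) (S : Type*) [NormedAddCommGroup S] [InnerProductSpace ℂ S]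
    (e : Fin (n + 1) → (S →ₗ[ℂ] S))
    (hcl : ∀ α β : Fin (n + 1), e α ∘ₗ e β + e β ∘ₗ e α
      = ((-2 : ℂ) * (if α = β then (if α = 0 then -1 else 1) else 0)) • LinearMap.id)
    (he0 : ∀ ψ φ : S, ⟪e 0 ψ, φ⟫ = ⟪ψ, e 0 φ⟫)
    (hskew : ∀ (i : Fin n) (ψ φ : S), ⟪e i.succ ψ, φ⟫ = -⟪ψ, e i.succ φ⟫)
    (ψ : S) :
    (∑ j : Fin n, ((⟪e 0 (e j.succ ψ), ψ⟫).re) ^ 2 ≤ (‖ψ‖ ^ 2) ^ 2) ∧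
    (ψ ≠ 0 → ∀ i j : Fin n,
      (i ≠ j → (⟪e i.succ ψ, e j.succ ψ⟫).re = 0) ∧ ‖e j.succ ψ‖ ^ 2 = ‖ψ‖ ^ 2) := by
  have h0sq (x : S) : e 0 (e 0 x) = x := by
    simpa using LinearMap.apply_apply_eq_of_comp_self_add_comp_self (hcl 0 0) x
  have hsq (j : Fin n) (x : S) : e j.succ (e j.succ x) = -x := by
    simpa [Fin.succ_ne_zero] using
      LinearMap.apply_apply_eq_of_comp_self_add_comp_self (hcl j.succ j.succ) x
  have hanti {i j : Fin n} (hij : i ≠ j) (x : S) :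
      e i.succ (e j.succ x) + e j.succ (e i.succ x) = 0 := by
    simpa [hij] using LinearMap.congr_fun (hcl i.succ j.succ) x
  have hnorm (j : Fin n) (x : S) : ‖e j.succ x‖ = ‖x‖ :=
    norm_apply_eq_of_adjoint_apply_apply (U := -e j.succ)
      (fun x y => by rw [hskew, LinearMap.neg_apply, inner_neg_right]) (by simp [hsq]) x
  have horth {i j : Fin n} (hij : i ≠ j) : (⟪e i.succ ψ, e j.succ ψ⟫).re = 0 :=
    re_inner_apply_apply_eq_zero_of_anticomm (hskew i) (hskew j) (hanti hij) ψ
  refine ⟨?_, fun _ i j => ⟨horth, by rw [hnorm]⟩⟩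
  let _ := InnerProductSpace.rclikeToReal ℂ S
  calc ∑ j : Fin n, (⟪e 0 (e j.succ ψ), ψ⟫).re ^ 2
      = ∑ j : Fin n, inner ℝ (e j.succ ψ) (e 0 ψ) ^ 2 := by
        simp only [he0, real_inner_eq_re_inner, RCLike.re_to_complex]
    _ ≤ ‖ψ‖ ^ 2 * ‖e 0 ψ‖ ^ 2 :=
        sum_real_inner_sq_le_of_orthogonal _ (fun _ _ => horth) (fun j => hnorm j ψ) _
    _ = (‖ψ‖ ^ 2) ^ 2 := by rw [norm_apply_eq_of_adjoint_apply_apply he0 h0sq]; ring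
end

section
/- Let S, ⟨·,·⟩ be a Clifford module as above, ρ ≥ 0 a real number, J ∈ ℝ^n, and set ℛ = (1/2)(ρ·Id + Σ_i J_i e_i·e_0·), a Hermitian operator. Suppose ψ ∈ S satisfies ℛ is positive semidefinite and ⟨ℛψ, ψ⟩ = 0. Then ℛψ = 0; consequently, with V = ⟨ψ,ψ⟩ and W_k = (e_k·ψ,ψ), one has ρV = Σ_i J_i W_i and ρ W_k = J_k V for each k. If in addition V > 0, then ρ = |J|. -/
/-!
A positive semidefinite Hermitian operator kills every vector on which its quadratic form
vanishes: otherwise `t ↦ ⟨ℛ(ψ + tℛψ), ψ + tℛψ⟩ = 2t‖ℛψ‖² + O(t²)` would turn negative.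
Since `e_i e_0 = -e_0 e_i`, the equation `ℛψ = 0` reads `ρψ = Σ J_i e_0 e_i ψ`. Pairing it with
`ψ` and with `e_0 e_k ψ`, where `e_0` is an isometry and `Re⟨e_i ψ, e_k ψ⟩ = δ_ik ‖ψ‖²`, gives
`ρV = Σ J_i W_i` and `ρW_k = J_k V`; substituting the second into `ρ` times the first gives
`ρ²V = |J|²V`.
-/

open RCLike

local notation "⟪" x ", " y "⟫" => @inner ℂ _ _ x y

theorem LinearMap.IsPositive.apply_eq_zero_of_re_inner_eq_zero {𝕜 E : Type*} [RCLike 𝕜]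
    [NormedAddCommGroup E] [InnerProductSpace 𝕜 E] {T : E →ₗ[𝕜] E} (hT : T.IsPositive)
    {x : E} (hx : re (inner 𝕜 (T x) x) = 0) : T x = 0 := by
  have hquad : ∀ t : ℝ, 0 ≤ re (inner 𝕜 (T (T x)) (T x)) * (t * t) + 2 * ‖T x‖ ^ 2 * t + 0 := by
    intro t
    have hsymm : re (inner 𝕜 (T (T x)) x) = ‖T x‖ ^ 2 := by
      rw [hT.isSymmetric, inner_self_eq_norm_sq]
    have h := hT.re_inner_nonneg_left (x + (t : 𝕜) • T x)
    simp only [map_add, map_smul, inner_add_left, inner_add_right, inner_smul_left,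
      inner_smul_right, conj_ofReal, re_ofReal_mul, hx, hsymm,
      inner_self_eq_norm_sq] at h
    linarith
  have hdisc := discrim_le_zero hquad
  rw [discrim] at hdisc
  simpa using hdisc

theorem re_inner_eq_zero_of_skew_of_anticomm {𝕜 E : Type*} [RCLike 𝕜]
    [NormedAddCommGroup E] [InnerProductSpace 𝕜 E] {A B : E →ₗ[𝕜] E}
    (hA : ∀ x y, inner 𝕜 (A x) y = -inner 𝕜 x (A y))
    (hB : ∀ x y, inner 𝕜 (B x) y = -inner 𝕜 x (B y))
    (hAB : ∀ x, A (B x) = -B (A x)) (x : E) : re (inner 𝕜 (A x) (B x)) = 0 := by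
  have h : inner 𝕜 (A x) (B x) = -inner 𝕜 (B x) (A x) := by
    rw [hA, hAB, inner_neg_right, neg_neg, hB, neg_neg]
  have hre := congrArg re h
  rw [map_neg, inner_re_symm (𝕜 := 𝕜) (B x)] at hre
  linarith

theorem eq_sqrt_sum_sq_of_mul_eq {ι : Type*} [Fintype ι] {ρ V : ℝ} {J W : ι → ℝ}
    (hρ : 0 ≤ ρ) (hV : 0 < V) (hsum : ρ * V = ∑ i, J i * W i)
    (hW : ∀ k, ρ * W k = J k * V) : ρ = Real.sqrt (∑ i, J i ^ 2) := by
  have hsq : ρ ^ 2 * V = (∑ i, J i ^ 2) * V := calc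
    ρ ^ 2 * V = ∑ i, J i * (ρ * W i) := by rw [sq, mul_assoc, hsum, Finset.mul_sum]; ring_nf
    _ = (∑ i, J i ^ 2) * V := by
      rw [Finset.sum_mul]; exact Finset.sum_congr rfl fun i _ ↦ by rw [hW]; ring
  rw [← mul_right_cancel₀ hV.ne' hsq, Real.sqrt_sq hρ]

def CliffordRelations {n : ℕ} {S : Type*} [AddCommGroup S] [Module ℂ S]
    (e : Fin (n + 1) → S →ₗ[ℂ] S) : Prop :=
  ∀ α β : Fin (n + 1), e α ∘ₗ e β + e β ∘ₗ e α
    = ((-2 : ℂ) * (if α = β then (if α = 0 then -1 else 1) else 0)) • LinearMap.id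

namespace CliffordRelations

variable {n : ℕ} {S : Type*}

section Module

variable [AddCommGroup S] [Module ℂ S] {e : Fin (n + 1) → S →ₗ[ℂ] S}

theorem zero_apply_zero (h : CliffordRelations e) (x : S) : e 0 (e 0 x) = x := by
  have := LinearMap.congr_fun (h 0 0) x
  simp only [if_true, mul_neg, mul_one, neg_neg, LinearMap.comp_apply,
    LinearMap.smul_apply, LinearMap.id_apply, ← two_smul ℂ] at this
  exact smul_right_injective S two_ne_zero this

theorem succ_apply_succ (h : CliffordRelations e) (i : Fin n) (x : S) :
    e i.succ (e i.succ x) = -x := by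
  have := LinearMap.congr_fun (h i.succ i.succ) x
  simp only [if_true, if_neg i.succ_ne_zero, mul_one, LinearMap.comp_apply,
    LinearMap.smul_apply, ← two_smul ℂ, neg_smul, ← smul_neg] at this
  exact smul_right_injective S two_ne_zero this

theorem apply_apply_of_ne (h : CliffordRelations e) {α β : Fin (n + 1)} (hαβ : α ≠ β) (x : S) :
    e α (e β x) = -e β (e α x) := by
  have := LinearMap.congr_fun (h α β) x
  simp only [LinearMap.add_apply, LinearMap.comp_apply, hαβ, if_false, mul_zero, zero_smul,
    LinearMap.zero_apply] at this
  exact eq_neg_of_add_eq_zero_left this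

end Module

variable [NormedAddCommGroup S] [InnerProductSpace ℂ S] {e : Fin (n + 1) → S →ₗ[ℂ] S}

theorem inner_zero_apply_zero_apply (h : CliffordRelations e)
    (he0 : ∀ ψ φ : S, ⟪e 0 ψ, φ⟫ = ⟪ψ, e 0 φ⟫) (x y : S) : ⟪e 0 x, e 0 y⟫ = ⟪x, y⟫ := by
  rw [he0, h.zero_apply_zero]

theorem re_inner_succ_apply_succ_apply (h : CliffordRelations e)
    (hskew : ∀ (i : Fin n) (ψ φ : S), ⟪e i.succ ψ, φ⟫ = -⟪ψ, e i.succ φ⟫) (i k : Fin n) (x : S) :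
    re ⟪e i.succ x, e k.succ x⟫ = if i = k then ‖x‖ ^ 2 else 0 := by
  split_ifs with hik
  · rw [hik, hskew, h.succ_apply_succ, inner_neg_right, neg_neg, inner_self_eq_norm_sq]
  · exact re_inner_eq_zero_of_skew_of_anticomm (hskew i) (hskew k)
      (h.apply_apply_of_ne (Fin.succ_injective _ |>.ne hik)) x

theorem isSymmetric_succ_comp_zero (h : CliffordRelations e)
    (he0 : ∀ ψ φ : S, ⟪e 0 ψ, φ⟫ = ⟪ψ, e 0 φ⟫)
    (hskew : ∀ (i : Fin n) (ψ φ : S), ⟪e i.succ ψ, φ⟫ = -⟪ψ, e i.succ φ⟫) (i : Fin n) :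
    (e i.succ ∘ₗ e 0).IsSymmetric := fun x y ↦ by
  rw [LinearMap.comp_apply, LinearMap.comp_apply, hskew, he0,
    h.apply_apply_of_ne i.succ_ne_zero.symm, inner_neg_right, neg_neg]

end CliffordRelations

theorem stmt9_general (n : ℕ) (S : Type*) [NormedAddCommGroup S] [InnerProductSpace ℂ S]
    (e : Fin (n + 1) → (S →ₗ[ℂ] S))
    (hcl : ∀ α β : Fin (n + 1), e α ∘ₗ e β + e β ∘ₗ e α
      = ((-2 : ℂ) * (if α = β then (if α = 0 then -1 else 1) else 0)) • LinearMap.id)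
    (he0 : ∀ ψ φ : S, ⟪e 0 ψ, φ⟫ = ⟪ψ, e 0 φ⟫)
    (hskew : ∀ (i : Fin n) (ψ φ : S), ⟪e i.succ ψ, φ⟫ = -⟪ψ, e i.succ φ⟫)
    (ρ : ℝ) (hρ : 0 ≤ ρ) (J : Fin n → ℝ)
    (R : S →ₗ[ℂ] S)
    (hR : R = (1 / 2 : ℂ) •
      ((ρ : ℂ) • LinearMap.id + ∑ i : Fin n, (J i : ℂ) • (e i.succ ∘ₗ e 0)))
    (hpsd : ∀ φ : S, 0 ≤ (⟪R φ, φ⟫).re)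
    (ψ : S) (h0 : ⟪R ψ, ψ⟫ = 0) :
    R ψ = 0 ∧
    ρ * ‖ψ‖ ^ 2 = ∑ i : Fin n, J i * (⟪e 0 (e i.succ ψ), ψ⟫).re ∧
    (∀ k : Fin n, ρ * (⟪e 0 (e k.succ ψ), ψ⟫).re = J k * ‖ψ‖ ^ 2) ∧
    (0 < ‖ψ‖ ^ 2 → ρ = Real.sqrt (∑ i : Fin n, J i ^ 2)) := by
  have hC : CliffordRelations e := hcl
  have hRsymm : R.IsSymmetric := by
    rw [hR]
    refine ((LinearMap.IsSymmetric.id.smul (conj_ofReal ρ)).add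
      (LinearMap.isSymmetric_sum _ fun i _ ↦ ?_)).smul (by simp [map_ofNat])
    exact (hC.isSymmetric_succ_comp_zero he0 hskew i).smul (conj_ofReal _)
  have hRψ : R ψ = 0 :=
    LinearMap.IsPositive.apply_eq_zero_of_re_inner_eq_zero ⟨hRsymm, hpsd⟩ (by rw [h0, zero_re])
  have hbal : (ρ : ℂ) • ψ = ∑ i, (J i : ℂ) • e 0 (e i.succ ψ) := by
    have hRψ' := hRψ
    simp only [hR, LinearMap.smul_apply, LinearMap.add_apply, LinearMap.id_apply,
      LinearMap.sum_apply, LinearMap.comp_apply, hC.apply_apply_of_ne (Fin.succ_ne_zero _),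
      smul_neg, Finset.sum_neg_distrib, smul_eq_zero] at hRψ'
    rw [← sub_eq_zero, sub_eq_add_neg]
    exact hRψ'.resolve_left (by norm_num)
  have hV : ρ * ‖ψ‖ ^ 2 = ∑ i, J i * (⟪e 0 (e i.succ ψ), ψ⟫).re := by
    have := congrArg (fun v ↦ re ⟪v, ψ⟫) hbal
    simpa [sum_inner, inner_smul_left, inner_self_eq_norm_sq, ← Complex.ofReal_pow,
      Complex.ofReal_re] using this
  have hW : ∀ k, ρ * (⟪e 0 (e k.succ ψ), ψ⟫).re = J k * ‖ψ‖ ^ 2 := by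
    intro k
    have := congrArg (fun v ↦ re ⟪v, e 0 (e k.succ ψ)⟫) hbal
    simpa [sum_inner, inner_smul_left, hC.inner_zero_apply_zero_apply he0,
      hC.re_inner_succ_apply_succ_apply hskew, inner_re_symm (𝕜 := ℂ) ψ] using this
  exact ⟨hRψ, hV, hW, fun hpos ↦ eq_sqrt_sum_sq_of_mul_eq hρ hpos hV hW⟩

/-- If ℛ = (1/2)(ρ·Id + Σ_i J_i e_i·e_0·) is positive semidefinite and ⟨ℛψ,ψ⟩ = 0,
then ℛψ = 0; with V = ⟨ψ,ψ⟩ and W_k = (e_k·ψ,ψ) one has ρV = Σ J_i W_i and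
ρW_k = J_k V; and if V > 0 then ρ = |J|. -/
theorem stmt9 (n : ℕ) (S : Type*) [NormedAddCommGroup S] [InnerProductSpace ℂ S]
    [FiniteDimensional ℂ S]
    (e : Fin (n + 1) → (S →ₗ[ℂ] S))
    (hcl : ∀ α β : Fin (n + 1), e α ∘ₗ e β + e β ∘ₗ e α
      = ((-2 : ℂ) * (if α = β then (if α = 0 then -1 else 1) else 0)) • LinearMap.id)
    (he0 : ∀ ψ φ : S, ⟪e 0 ψ, φ⟫ = ⟪ψ, e 0 φ⟫)
    (hskew : ∀ (i : Fin n) (ψ φ : S), ⟪e i.succ ψ, φ⟫ = -⟪ψ, e i.succ φ⟫)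
    (ρ : ℝ) (hρ : 0 ≤ ρ) (J : Fin n → ℝ)
    (R : S →ₗ[ℂ] S)
    (hR : R = (1 / 2 : ℂ) •
      ((ρ : ℂ) • LinearMap.id + ∑ i : Fin n, (J i : ℂ) • (e i.succ ∘ₗ e 0)))
    (hpsd : ∀ φ : S, 0 ≤ (⟪R φ, φ⟫).re)
    (ψ : S) (h0 : ⟪R ψ, ψ⟫ = 0) :
    R ψ = 0 ∧
    ρ * ‖ψ‖ ^ 2 = ∑ i : Fin n, J i * (⟪e 0 (e i.succ ψ), ψ⟫).re ∧
    (∀ k : Fin n, ρ * (⟪e 0 (e k.succ ψ), ψ⟫).re = J k * ‖ψ‖ ^ 2) ∧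
    (0 < ‖ψ‖ ^ 2 → ρ = Real.sqrt (∑ i : Fin n, J i ^ 2)) :=
  stmt9_general n S e hcl he0 hskew ρ hρ J R hR hpsd ψ h0
end
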